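/- arXiv:2605.19716 — 3 statements merged into one kernel-verified Lean document; each statement's English description precedes it below -/
import Mathlib

section
/- Let m be a positive integer and C₀ ≥ 1. There exists a constant C > 1 depending only on m and C₀ such that for all p, q ∈ (0, m) with p + q < m, the integral over w ∈ ℝ^m with |w| ≤ C₀ of |w|^(−p) |z − w|^(−q) dw is at most C / (m − (p+q)), uniformly in z ∈ ℝ^m. -/
/-!
The integrand is at most `min(‖w‖, ‖w - z‖) ^ (-(p + q))`, and on the ball `‖w‖ ≤ C₀` the smaller
of the two norms is itself at most `C₀`. Hence the integrand is dominated by `K w + K (w - z)`,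
where `K = ‖·‖ ^ (-(p + q))` cut off outside the ball. By translation invariance this integrates to
`2 ∫ K`, and polar coordinates give `∫ K = m |B₁| C₀ ^ (m - (p + q)) / (m - (p + q))`.
-/

open MeasureTheory Set Metric

lemma Real.rpow_neg_mul_rpow_neg_le_rpow_neg_add {a b p q : ℝ} (hp : 0 < p) (hq : 0 ≤ q)
    (ha : 0 ≤ a) (hab : a ≤ b) : a ^ (-p) * b ^ (-q) ≤ a ^ (-(p + q)) := by
  rcases ha.eq_or_lt with rfl | ha
  · rw [Real.zero_rpow (neg_ne_zero.2 hp.ne'), zero_mul]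
    exact Real.rpow_nonneg le_rfl _
  · calc a ^ (-p) * b ^ (-q) ≤ a ^ (-p) * a ^ (-q) := by
          gcongr ?_ * ?_
          exact Real.rpow_le_rpow_of_nonpos ha hab (neg_nonpos.2 hq)
      _ = a ^ (-(p + q)) := by rw [← Real.rpow_add ha, neg_add]

lemma norm_rpow_neg_mul_norm_sub_rpow_neg_le {E : Type*} [SeminormedAddCommGroup E]
    {p q R : ℝ} (hp : 0 < p) (hq : 0 < q) {w : E} (hw : ‖w‖ ≤ R) (z : E) :
    ‖w‖ ^ (-p) * ‖w - z‖ ^ (-q) ≤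
      (closedBall 0 R).indicator (‖·‖ ^ (-(p + q))) w +
        (closedBall 0 R).indicator (‖·‖ ^ (-(p + q))) (w - z) := by
  have hnonneg : ∀ u : E, 0 ≤ (closedBall 0 R).indicator (‖·‖ ^ (-(p + q))) u :=
    indicator_nonneg fun u _ ↦ Real.rpow_nonneg (norm_nonneg u) _
  rcases le_total ‖w‖ ‖w - z‖ with h | h
  · refine le_add_of_le_of_nonneg ?_ (hnonneg _)
    rw [indicator_of_mem (mem_closedBall_zero_iff.2 hw)]
    exact Real.rpow_neg_mul_rpow_neg_le_rpow_neg_add hp hq.le (norm_nonneg w) h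
  · refine le_add_of_nonneg_of_le (hnonneg _) ?_
    rw [indicator_of_mem (mem_closedBall_zero_iff.2 (h.trans hw)), mul_comm, add_comm p]
    exact Real.rpow_neg_mul_rpow_neg_le_rpow_neg_add hq hp.le (norm_nonneg _) h

lemma setIntegral_Ioc_pow_sub_one_mul_rpow_neg {s R : ℝ} {n : ℕ} (hn : 0 < n) (hs : s < n)
    (hR : 0 ≤ R) :
    ∫ y in Ioc 0 R, y ^ (n - 1) * y ^ (-s) = R ^ ((n : ℝ) - s) / (n - s) := by
  have hexp : (-1 : ℝ) < n - 1 - s := by linarith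
  rw [setIntegral_congr_fun measurableSet_Ioc (g := fun y ↦ y ^ ((n : ℝ) - 1 - s)) fun y hy ↦ ?_,
    ← intervalIntegral.integral_of_le hR, integral_rpow (.inl hexp),
    Real.zero_rpow (by linarith), sub_zero, show (n : ℝ) - 1 - s + 1 = n - s by ring]
  rw [← Real.rpow_natCast, ← Real.rpow_add hy.1, Nat.cast_sub hn]
  push_cast; ring_nf

namespace MeasureTheory

variable {E : Type*} [NormedAddCommGroup E] [NormedSpace ℝ E] [FiniteDimensional ℝ E]
  [MeasurableSpace E] [BorelSpace E] [Nontrivial E] (μ : Measure E) [μ.IsAddHaarMeasure]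

local notation "dim" => Module.finrank ℝ E

lemma integrableOn_closedBall_norm_rpow_neg {s : ℝ} (hs : s < dim) (R : ℝ) :
    IntegrableOn (fun x : E ↦ ‖x‖ ^ (-s)) (closedBall 0 R) μ :=
  (locallyIntegrable_of_norm_le_rpow Module.finrank_pos hs (C := 1)
    (.of_forall fun x ↦ by simp [abs_of_nonneg (Real.rpow_nonneg (norm_nonneg x) _)])
    (measurable_norm.pow_const _).aestronglyMeasurable).integrableOn_isCompact
    (isCompact_closedBall 0 R)

lemma setIntegral_closedBall_norm_rpow_neg {s R : ℝ} (hs : s < dim) (hR : 0 ≤ R) :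
    ∫ x in closedBall 0 R, ‖x‖ ^ (-s) ∂μ =
      dim * μ.real (ball 0 1) * (R ^ ((dim : ℝ) - s) / (dim - s)) := by
  have hradial : ∀ x : E, (closedBall 0 R).indicator (‖·‖ ^ (-s)) x =
      (Iic R).indicator (· ^ (-s)) ‖x‖ := fun x ↦ by
    by_cases hx : ‖x‖ ≤ R <;> simp [indicator, hx]
  have hpolar : ∫ y in Ioi 0, y ^ (dim - 1) • (Iic R).indicator (· ^ (-s)) y =
      ∫ y in Ioc 0 R, y ^ (dim - 1) * y ^ (-s) := by
    simp_rw [smul_eq_mul, ← indicator_mul_right (Iic R) (· ^ (dim - 1))]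
    rw [setIntegral_indicator measurableSet_Iic, Ioi_inter_Iic]
  rw [← integral_indicator measurableSet_closedBall, funext hradial, integral_fun_norm_addHaar,
    hpolar, setIntegral_Ioc_pow_sub_one_mul_rpow_neg Module.finrank_pos hs hR, nsmul_eq_mul,
    smul_eq_mul, mul_assoc]

lemma setIntegral_closedBall_norm_rpow_neg_mul_norm_sub_rpow_neg_le {p q R : ℝ} (hp : 0 < p)
    (hq : 0 < q) (hpq : p + q < dim) (hR : 0 ≤ R) (z : E) :
    ∫ w in closedBall 0 R, ‖w‖ ^ (-p) * ‖w - z‖ ^ (-q) ∂μ ≤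
      2 * (dim * μ.real (ball 0 1) * (R ^ ((dim : ℝ) - (p + q)) / (dim - (p + q)))) := by
  set K := (closedBall (0 : E) R).indicator (‖·‖ ^ (-(p + q)))
  have hK : Integrable K μ := (integrable_indicator_iff measurableSet_closedBall).2
    (integrableOn_closedBall_norm_rpow_neg μ hpq R)
  have hK_nonneg : 0 ≤ K := indicator_nonneg fun u _ ↦ Real.rpow_nonneg (norm_nonneg u) _
  have hsum : Integrable (fun w ↦ K w + K (w - z)) μ := hK.add (hK.comp_sub_right z)
  calc ∫ w in closedBall 0 R, ‖w‖ ^ (-p) * ‖w - z‖ ^ (-q) ∂μ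
      ≤ ∫ w in closedBall 0 R, K w + K (w - z) ∂μ := by
        refine integral_mono_of_nonneg (.of_forall fun w ↦ by positivity) hsum.integrableOn ?_
        filter_upwards [ae_restrict_mem measurableSet_closedBall] with w hw
        exact norm_rpow_neg_mul_norm_sub_rpow_neg_le hp hq (mem_closedBall_zero_iff.1 hw) z
    _ ≤ ∫ w, K w + K (w - z) ∂μ :=
        setIntegral_le_integral hsum (.of_forall fun w ↦ add_nonneg (hK_nonneg _) (hK_nonneg _))
    _ = 2 * ∫ u, K u ∂μ := by
        rw [integral_add hK (hK.comp_sub_right z), integral_sub_right_eq_self, two_mul]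
    _ = _ := by
        rw [integral_indicator measurableSet_closedBall,
          setIntegral_closedBall_norm_rpow_neg μ (by linarith) hR]

end MeasureTheory

theorem convolution_wholespace_general (m : ℕ) (C₀ : ℝ) (hC₀ : 1 ≤ C₀) :
    ∃ C : ℝ, 1 < C ∧ ∀ p q : ℝ, p ∈ Set.Ioo (0:ℝ) (m:ℝ) → q ∈ Set.Ioo (0:ℝ) (m:ℝ) →
      p + q < (m:ℝ) →
      ∀ z : EuclideanSpace ℝ (Fin m),
        (∫ w in {w : EuclideanSpace ℝ (Fin m) | ‖w‖ ≤ C₀},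
            ‖w‖ ^ (-p) * ‖z - w‖ ^ (-q)) ≤ C / ((m:ℝ) - (p + q)) := by
  set V := (volume : Measure (EuclideanSpace ℝ (Fin m))).real (ball 0 1)
  have hC : 0 ≤ 2 * (m * V * C₀ ^ m) := by positivity
  refine ⟨2 * (m * V * C₀ ^ m) + 2, by linarith, fun p q hp hq hpq z ↦ ?_⟩
  have : Nontrivial (EuclideanSpace ℝ (Fin m)) := by
    have : Nonempty (Fin m) := ⟨⟨0, by exact_mod_cast hp.1.trans hp.2⟩⟩
    infer_instance
  have hball : {w : EuclideanSpace ℝ (Fin m) | ‖w‖ ≤ C₀} = closedBall 0 C₀ := by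
    ext; simp
  simp_rw [hball, norm_sub_rev z]
  calc _ ≤ 2 * (m * V * (C₀ ^ ((m : ℝ) - (p + q)) / (m - (p + q)))) := by
        simpa using setIntegral_closedBall_norm_rpow_neg_mul_norm_sub_rpow_neg_le volume hp.1 hq.1
          (by simpa using hpq) (zero_le_one.trans hC₀) z
    _ ≤ _ := by
        rw [← mul_div_assoc, ← mul_div_assoc]
        gcongr
        refine le_add_of_le_of_nonneg ?_ zero_le_two
        gcongr
        exact (Real.rpow_le_rpow_of_exponent_le hC₀ (by linarith [hp.1, hq.1])).trans_eq
          (Real.rpow_natCast C₀ m)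

/-- Lemma A.1: uniform convolution bound on a ball, with explicit dependence on the gap
`m - (p + q)`. -/
theorem convolution_wholespace (m : ℕ) (hm : 0 < m) (C₀ : ℝ) (hC₀ : 1 ≤ C₀) :
    ∃ C : ℝ, 1 < C ∧ ∀ p q : ℝ, p ∈ Set.Ioo (0:ℝ) (m:ℝ) → q ∈ Set.Ioo (0:ℝ) (m:ℝ) →
      p + q < (m:ℝ) →
      ∀ z : EuclideanSpace ℝ (Fin m),
        (∫ w in {w : EuclideanSpace ℝ (Fin m) | ‖w‖ ≤ C₀},
            ‖w‖ ^ (-p) * ‖z - w‖ ^ (-q)) ≤ C / ((m:ℝ) - (p + q)) :=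
  convolution_wholespace_general m C₀ hC₀
end

section
/- Let d ≥ 3 be an integer, and let a satisfy 4/((4d−3)(d−2)) < a < 1/((d−1)(d−2)) with a₁ := a/2 + 1/(2(d−1)(d−2)). Suppose μ satisfies (d−1)a₁/2 + 1/(2(d−2)) < μ < 1/(d−2). Define γ := (μ + 1 − (d−1)a)/(μ + a) and γ₁ := (μ + 1 − (d−1)a₁)/(μ + a₁). Then γ > γ₁ > (d−1)/(dμ). -/
/-- The exponents `γ` and `γ₁` satisfy `γ > γ₁ > (d-1)/(dμ)` in the admissible
parameter range. -/
theorem gamma_chain (d : ℕ) (hd : 3 ≤ d) (a a₁ μ : ℝ)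
    (ha1 : 4 / ((4 * (d:ℝ) - 3) * ((d:ℝ) - 2)) < a)
    (ha2 : a < 1 / (((d:ℝ) - 1) * ((d:ℝ) - 2)))
    (ha₁ : a₁ = a / 2 + 1 / (2 * ((d:ℝ) - 1) * ((d:ℝ) - 2)))
    (hμ1 : ((d:ℝ) - 1) * a₁ / 2 + 1 / (2 * ((d:ℝ) - 2)) < μ)
    (hμ2 : μ < 1 / ((d:ℝ) - 2)) :
    (μ + 1 - ((d:ℝ) - 1) * a₁) / (μ + a₁) < (μ + 1 - ((d:ℝ) - 1) * a) / (μ + a) ∧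
      ((d:ℝ) - 1) / ((d:ℝ) * μ) < (μ + 1 - ((d:ℝ) - 1) * a₁) / (μ + a₁) := by
  have hD : (3:ℝ) ≤ (d:ℝ) := by exact_mod_cast hd
  have h2 : (1:ℝ) ≤ (d:ℝ) - 2 := by linarith
  have h1 : (2:ℝ) ≤ (d:ℝ) - 1 := by linarith
  have hP : (0:ℝ) < ((d:ℝ) - 1) * ((d:ℝ) - 2) := by nlinarith
  -- a positive
  have h43 : (0:ℝ) < (4 * (d:ℝ) - 3) * ((d:ℝ) - 2) := by nlinarith
  have ha0 : 0 < a := lt_trans (div_pos (by norm_num) h43) ha1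
  -- a * P < 1
  have ha2' : a * (((d:ℝ) - 1) * ((d:ℝ) - 2)) < 1 := (lt_div_iff₀ hP).mp ha2
  -- a < a₁
  have haa₁ : a < a₁ := by
    rw [ha₁]
    rw [div_add_div _ _ (by norm_num) (by positivity), lt_div_iff₀ (by positivity)]
    nlinarith
  -- a₁ * P < 1
  have ha₁' : a₁ * (((d:ℝ) - 1) * ((d:ℝ) - 2)) < 1 := by
    rw [ha₁]
    have hne : (2 * ((d:ℝ) - 1) * ((d:ℝ) - 2)) ≠ 0 := by positivity
    have : (1 / (2 * ((d:ℝ) - 1) * ((d:ℝ) - 2))) * (2 * ((d:ℝ) - 1) * ((d:ℝ) - 2)) = 1 :=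
      one_div_mul_cancel hne
    nlinarith
  have ha₁0 : 0 < a₁ := by nlinarith
  -- μ > (d-1) * a₁
  have hμa : ((d:ℝ) - 1) * a₁ < μ := by
    have hd2 : (0:ℝ) < (d:ℝ) - 2 := by linarith
    have key : ((d:ℝ) - 1) * a₁ < 1 / ((d:ℝ) - 2) := by
      rw [lt_div_iff₀ hd2]; nlinarith
    have h12 : ((d:ℝ) - 1) * a₁ / 2 < 1 / (2 * ((d:ℝ) - 2)) := by
      rw [div_lt_div_iff₀ (by norm_num) (by positivity)]
      rw [lt_div_iff₀ hd2] at key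
      nlinarith
    linarith
  have hμ0 : 0 < μ := by nlinarith
  have hμa0 : 0 < μ + a := by linarith
  have hμa₁0 : 0 < μ + a₁ := by linarith
  have hdμ : (0:ℝ) < (d:ℝ) * μ + 1 := by nlinarith
  constructor
  · rw [div_lt_div_iff₀ hμa₁0 hμa0]
    have hid : (μ + 1 - ((d:ℝ) - 1) * a) * (μ + a₁) - (μ + 1 - ((d:ℝ) - 1) * a₁) * (μ + a)
        = (a₁ - a) * ((d:ℝ) * μ + 1) := by ring
    linarith [mul_pos (sub_pos.mpr haa₁) hdμ]
  · rw [div_lt_div_iff₀ (by positivity) hμa₁0]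
    have hid : (μ + 1 - ((d:ℝ) - 1) * a₁) * ((d:ℝ) * μ) - ((d:ℝ) - 1) * (μ + a₁)
        = (μ - ((d:ℝ) - 1) * a₁) * ((d:ℝ) * μ + 1) := by ring
    linarith [mul_pos (sub_pos.mpr hμa) hdμ]
end

section
/- Let d ≥ 3, and let Ω : (0,∞)² → ℝ be measurable with 0 < Ω(r,z) and Ω(r,z) ≥ M'^{−1} r^{−(d−1)/(dμ)} z^{−1/(dμ)} for all 2 < z < r < 2z, where M' > 1 and μ ∈ (1/d, 1/(d−2)). Define, for X ∈ ℝ^{d+4} written as X = (x,y) ∈ ℝ^{d+1} × ℝ³, Ψ₀(X) := β_d ∫_{ℝ^{d+4}} |X−Y|^{−d−2} |ξ|^{d−3} |η|^{−1} Ω(|ξ|,|η|) dY with Y = (ξ,η), β_d > 0. Then there is C > 1 depending only on d, M' (not on μ) such that Ψ₀(X) ≥ (C(1−(d−2)μ))^{−1} ⟨X⟩^{d−2−1/μ} for all X ∈ ℝ^{d+4}, where ⟨X⟩ = (1+|X|²)^{1/2}. -/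
/-!
Restrict the integral to the region where `2⟨X⟩ < |η|` and `ξ` lies in the ball of radius
`|η|/2` around `(3|η|/2) e₀`, so that `|η| < |ξ| < 2|η|`. There `|X - Y| ≤ 4|η|`, and the lower
bound on `Ω` makes the integrand at least a constant times `|η|^(-6-1/μ)`. Integrating out `ξ`
over the ball contributes `|η|^(d+1)`, and the remaining radial integral over `|η| > 2⟨X⟩` in `ℝ³`
is `c μ ⟨X⟩^(d-2-1/μ) / (1 - (d-2)μ)`; it converges precisely because `d - 2 - 1/μ < 0`.
-/

open MeasureTheory Set Metric Module
open scoped ENNReal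

theorem inv_four_mul_rpow_le_rpow {z r e : ℝ} (hz : 0 < z) (hzr : z ≤ r) (hr : r ≤ 2 * z)
    (he : -2 ≤ e) : 4⁻¹ * z ^ e ≤ r ^ e := by
  rcases le_or_gt 0 e with he0 | he0
  · have := Real.rpow_le_rpow hz.le hzr he0
    nlinarith [Real.rpow_nonneg hz.le e]
  · have h2 : (4:ℝ)⁻¹ ≤ 2 ^ e := by
      calc (4:ℝ)⁻¹ = 2 ^ (-2:ℝ) := by norm_num
        _ ≤ 2 ^ e := Real.rpow_le_rpow_of_exponent_le (by norm_num) he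
    calc 4⁻¹ * z ^ e ≤ 2 ^ e * z ^ e := by gcongr
      _ = (2 * z) ^ e := (Real.mul_rpow (by norm_num) hz.le).symm
      _ ≤ r ^ e := Real.rpow_le_rpow_of_nonpos (hz.trans_le hzr) hr he0.le

theorem inv_four_mul_inv_mul_rpow_le_rpow_mul_inv_mul {d μ M' r z w : ℝ} (hd : 1 ≤ d)
    (hdμ : 1 ≤ d * μ) (hM' : 0 ≤ M') (hz : 0 < z) (hzr : z ≤ r) (hr : r ≤ 2 * z)
    (hw : M'⁻¹ * r ^ (-((d - 1) / (d * μ))) * z ^ (-(1 / (d * μ))) ≤ w) :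
    4⁻¹ * M'⁻¹ * z ^ (d - 4 - 1 / μ) ≤ r ^ (d - 3) * z⁻¹ * w := by
  have hr0 : 0 < r := hz.trans_le hzr
  have hμ : μ ≠ 0 := by rintro rfl; simp at hdμ; linarith
  set e := d - 3 - (d - 1) / (d * μ)
  have he : -2 ≤ e := by
    have : (d - 1) / (d * μ) ≤ d - 1 := div_le_self (by linarith) hdμ
    linarith
  have hexp : d - 4 - 1 / μ = e + (-1 + -(1 / (d * μ))) := by
    have hd0 : d ≠ 0 := by positivity
    simp only [e]
    field_simp
    ring
  calc 4⁻¹ * M'⁻¹ * z ^ (d - 4 - 1 / μ) = M'⁻¹ * (4⁻¹ * z ^ e) * z ^ (-1 + -(1 / (d * μ))) := by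
        rw [hexp, Real.rpow_add hz]; ring
    _ ≤ M'⁻¹ * r ^ e * z ^ (-1 + -(1 / (d * μ))) := by
        gcongr; exact inv_four_mul_rpow_le_rpow hz hzr hr he
    _ = r ^ (d - 3) * z⁻¹ * (M'⁻¹ * r ^ (-((d - 1) / (d * μ))) * z ^ (-(1 / (d * μ)))) := by
        rw [show e = (d - 3) + -((d - 1) / (d * μ)) by ring, Real.rpow_add hr0, Real.rpow_add hz,
          Real.rpow_neg_one]
        ring
    _ ≤ r ^ (d - 3) * z⁻¹ * w := by gcongr

theorem sqrt_norm_sub_sq_add_norm_sub_sq_le {E F : Type*} [SeminormedAddCommGroup E]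
    [SeminormedAddCommGroup F] {x ξ : E} {y η : F} {A : ℝ} (hx : ‖x‖ ≤ A) (hy : ‖y‖ ≤ A)
    (hη : 2 * A ≤ ‖η‖) (hξ : ‖ξ‖ ≤ 2 * ‖η‖) :
    √(‖x - ξ‖ ^ 2 + ‖y - η‖ ^ 2) ≤ 4 * ‖η‖ := by
  have h₁ : ‖x - ξ‖ ≤ 5 / 2 * ‖η‖ := by linarith [norm_sub_le x ξ]
  have h₂ : ‖y - η‖ ≤ 3 / 2 * ‖η‖ := by linarith [norm_sub_le y η]
  rw [Real.sqrt_le_left (by linarith [norm_nonneg y])]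
  nlinarith [norm_nonneg (x - ξ), norm_nonneg (y - η)]

theorem rpow_mul_inv_mul_rpow_le_sqrt_rpow_mul {E F : Type*} [SeminormedAddCommGroup E]
    [SeminormedAddCommGroup F] {d μ M' A w : ℝ} (hd : 1 ≤ d) (hdμ : 1 ≤ d * μ) (hM' : 0 ≤ M')
    {x ξ : E} {y η : F} (hx : ‖x‖ ≤ A) (hy : ‖y‖ ≤ A) (hη : 2 * A < ‖η‖)
    (hξ₁ : ‖η‖ ≤ ‖ξ‖) (hξ₂ : ‖ξ‖ ≤ 2 * ‖η‖)
    (hw : M'⁻¹ * ‖ξ‖ ^ (-((d - 1) / (d * μ))) * ‖η‖ ^ (-(1 / (d * μ))) ≤ w) :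
    4 ^ (-d - 2) * (4⁻¹ * M'⁻¹) * ‖η‖ ^ (-6 - 1 / μ) ≤
      √(‖x - ξ‖ ^ 2 + ‖y - η‖ ^ 2) ^ (-d - 2) * (‖ξ‖ ^ (d - 3) * ‖η‖⁻¹ * w) := by
  have hA : 0 ≤ A := (norm_nonneg x).trans hx
  have hη0 : 0 < ‖η‖ := by linarith
  have hdist : 0 < √(‖x - ξ‖ ^ 2 + ‖y - η‖ ^ 2) := by
    have : 0 < ‖y - η‖ := by linarith [norm_sub_norm_le η y, norm_sub_rev y η]
    positivity
  have hkernel : (4 * ‖η‖) ^ (-d - 2) ≤ √(‖x - ξ‖ ^ 2 + ‖y - η‖ ^ 2) ^ (-d - 2) :=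
    Real.rpow_le_rpow_of_nonpos hdist (sqrt_norm_sub_sq_add_norm_sub_sq_le hx hy hη.le hξ₂)
      (by linarith)
  have hdensity := inv_four_mul_inv_mul_rpow_le_rpow_mul_inv_mul hd hdμ hM' hη0 hξ₁ hξ₂ hw
  calc 4 ^ (-d - 2) * (4⁻¹ * M'⁻¹) * ‖η‖ ^ (-6 - 1 / μ)
      = (4 * ‖η‖) ^ (-d - 2) * (4⁻¹ * M'⁻¹ * ‖η‖ ^ (d - 4 - 1 / μ)) := by
        rw [Real.mul_rpow (by norm_num) hη0.le,
          show -6 - 1 / μ = (-d - 2) + (d - 4 - 1 / μ) by ring, Real.rpow_add hη0]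
        ring
    _ ≤ √(‖x - ξ‖ ^ 2 + ‖y - η‖ ^ 2) ^ (-d - 2) * (‖ξ‖ ^ (d - 3) * ‖η‖⁻¹ * w) :=
        mul_le_mul hkernel hdensity (by positivity) (by positivity)

theorem lintegral_prod_mul_indicator {α β : Type*} [MeasurableSpace α] [MeasurableSpace β]
    (μ : Measure α) (ν : Measure β) [SFinite μ] [SFinite ν] {g : β → ℝ≥0∞} (hg : Measurable g)
    {S : Set (α × β)} (hS : MeasurableSet S) :
    ∫⁻ z, g z.2 * S.indicator 1 z ∂μ.prod ν = ∫⁻ y, g y * μ ((·, y) ⁻¹' S) ∂ν := by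
  rw [lintegral_prod_symm (fun z => g z.2 * S.indicator 1 z)
    ((hg.comp measurable_snd).mul (measurable_one.indicator hS)).aemeasurable]
  refine lintegral_congr fun y => ?_
  have hfiber : ∫⁻ x, S.indicator 1 (x, y) ∂μ = μ ((·, y) ⁻¹' S) := by
    rw [← lintegral_indicator_one (measurable_prodMk_right hS)]
    rfl
  rw [← hfiber]
  exact lintegral_const_mul (g y) (f := fun x => S.indicator 1 (x, y))
    ((measurable_one.indicator hS).comp measurable_prodMk_right)

section Haar
variable {F : Type*} [NormedAddCommGroup F] [NormedSpace ℝ F] [Nontrivial F]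
  [FiniteDimensional ℝ F] [MeasurableSpace F] [BorelSpace F] (ν : Measure F) [ν.IsAddHaarMeasure]

theorem lintegral_indicator_lt_norm_rpow {p R : ℝ} (hp : p < -finrank ℝ F) (hR : 0 < R) :
    ∫⁻ y, {y : F | R < ‖y‖}.indicator (fun y => ENNReal.ofReal (‖y‖ ^ p)) y ∂ν =
      ENNReal.ofReal (finrank ℝ F * ν.real (ball 0 1) *
        (R ^ (p + finrank ℝ F) / -(p + finrank ℝ F))) := by
  set n : ℕ := finrank ℝ F
  set f : ℝ → ℝ := (Ioi R).indicator (· ^ p)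
  have hpow : EqOn (fun r : ℝ => r ^ (n - 1) • f r) ((Ioi R).indicator (· ^ (p + n - 1)))
      (Ioi 0) := by
    intro r (hr : 0 < r)
    by_cases hRr : R < r
    · have hn : 1 ≤ n := Module.finrank_pos
      simp only [f, indicator_of_mem (show r ∈ Ioi R from hRr), smul_eq_mul]
      rw [← Real.rpow_natCast, Nat.cast_sub hn, Nat.cast_one, ← Real.rpow_add hr]
      ring_nf
    · simp [f, indicator_of_notMem (show r ∉ Ioi R from hRr)]
  have hint : Integrable (fun y : F => f ‖y‖) ν := by
    rw [integrable_fun_norm_addHaar, integrableOn_congr_fun hpow measurableSet_Ioi,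
      ← integrable_indicator_iff measurableSet_Ioi, indicator_indicator, Ioi_inter_Ioi,
      max_eq_right hR.le, integrable_indicator_iff measurableSet_Ioi]
    exact integrableOn_Ioi_rpow_of_lt (by linarith) hR
  have hf : ∀ y : F, {y : F | R < ‖y‖}.indicator (fun y => ENNReal.ofReal (‖y‖ ^ p)) y =
      ENNReal.ofReal (f ‖y‖) := fun y => by
    by_cases h : R < ‖y‖ <;> simp [f, h]
  have hf_nonneg : 0 ≤ᵐ[ν] fun y => f ‖y‖ :=
    .of_forall fun y => indicator_nonneg (fun r (hr : R < r) => Real.rpow_nonneg (hR.trans hr).le _) _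
  rw [lintegral_congr hf, ← ofReal_integral_eq_lintegral_ofReal hint hf_nonneg,
    integral_fun_norm_addHaar, setIntegral_congr_fun measurableSet_Ioi hpow,
    integral_indicator measurableSet_Ioi, Measure.restrict_restrict measurableSet_Ioi,
    Ioi_inter_Ioi, max_eq_left hR.le, integral_Ioi_rpow_of_lt (by linarith) hR, nsmul_eq_mul,
    smul_eq_mul, sub_add_cancel, neg_div, div_neg, mul_assoc]

variable {E : Type*} [NormedAddCommGroup E] [NormedSpace ℝ E] [Nontrivial E]
  [FiniteDimensional ℝ E] [MeasurableSpace E] [BorelSpace E] (μ : Measure E) [μ.IsAddHaarMeasure]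

theorem lintegral_indicator_lt_norm_rpow_mul_indicator_ball {c : F → E} (hc : Continuous c)
    {q R : ℝ} (hq : q + finrank ℝ E + finrank ℝ F < 0) (hR : 0 < R) :
    ∫⁻ z, {y : F | R < ‖y‖}.indicator (fun y => ENNReal.ofReal (‖y‖ ^ q)) z.2 *
        {z : E × F | z.1 ∈ ball (c z.2) (‖z.2‖ / 2)}.indicator 1 z ∂μ.prod ν =
      ENNReal.ofReal (μ.real (ball 0 1) / 2 ^ finrank ℝ E * (finrank ℝ F * ν.real (ball 0 1) *
        (R ^ (q + finrank ℝ E + finrank ℝ F) / -(q + finrank ℝ E + finrank ℝ F)))) := by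
  have hfiber : ∀ y : F, {y : F | R < ‖y‖}.indicator (fun y => ENNReal.ofReal (‖y‖ ^ q)) y *
      μ (ball (c y) (‖y‖ / 2)) = ENNReal.ofReal (μ.real (ball 0 1) / 2 ^ finrank ℝ E) *
      {y : F | R < ‖y‖}.indicator (fun y => ENNReal.ofReal (‖y‖ ^ (q + finrank ℝ E))) y := by
    intro y
    by_cases hy : R < ‖y‖
    · have hy0 : 0 < ‖y‖ := hR.trans hy
      simp only [indicator_of_mem (show y ∈ {y : F | R < ‖y‖} from hy)]
      rw [Measure.addHaar_ball _ _ (by positivity), ← ofReal_measureReal,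
        ← ENNReal.ofReal_mul (by positivity), ← ENNReal.ofReal_mul (by positivity),
        ← ENNReal.ofReal_mul (by positivity),
        Real.rpow_add hy0, Real.rpow_natCast, div_pow]
      ring_nf
    · simp [hy]
  have hS : MeasurableSet {z : E × F | z.1 ∈ ball (c z.2) (‖z.2‖ / 2)} :=
    (isOpen_lt (f := fun z : E × F => dist z.1 (c z.2)) (by fun_prop) (by fun_prop)).measurableSet
  have hg : Measurable ({y : F | R < ‖y‖}.indicator fun y => ENNReal.ofReal (‖y‖ ^ q)) :=
    (measurable_norm.pow_const q).ennreal_ofReal.indicator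
      (measurableSet_lt measurable_const measurable_norm)
  rw [lintegral_prod_mul_indicator μ ν hg hS]
  refine (lintegral_congr hfiber).trans ?_
  rw [lintegral_const_mul' _ _ ENNReal.ofReal_ne_top,
    lintegral_indicator_lt_norm_rpow ν (by linarith) hR, ← ENNReal.ofReal_mul (by positivity)]

end Haar

theorem rpow_mul_indicator_le_sqrt_rpow_mul {E F : Type*} [NormedAddCommGroup E] [NormedSpace ℝ E]
    [SeminormedAddCommGroup F] {d μ M' A : ℝ} (hd : 1 ≤ d) (hdμ : 1 ≤ d * μ) (hM' : 0 ≤ M')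
    (hA : 1 ≤ A) {Ω : ℝ → ℝ → ℝ} (hΩ : ∀ r z : ℝ, 2 < z → z < r → r < 2 * z →
      M'⁻¹ * r ^ (-((d - 1) / (d * μ))) * z ^ (-(1 / (d * μ))) ≤ Ω r z)
    {e : E} (he : ‖e‖ = 1) {X : E × F} (hX₁ : ‖X.1‖ ≤ A) (hX₂ : ‖X.2‖ ≤ A) (Y : E × F) :
    ENNReal.ofReal (4 ^ (-d - 2) * (4⁻¹ * M'⁻¹)) *
        ({η : F | 2 * A < ‖η‖}.indicator (fun η => ENNReal.ofReal (‖η‖ ^ (-6 - 1 / μ))) Y.2 *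
          {Y : E × F | Y.1 ∈ ball ((3 * ‖Y.2‖ / 2) • e) (‖Y.2‖ / 2)}.indicator 1 Y) ≤
      ENNReal.ofReal (√(‖X.1 - Y.1‖ ^ 2 + ‖X.2 - Y.2‖ ^ 2) ^ (-d - 2) *
        (‖Y.1‖ ^ (d - 3) * ‖Y.2‖⁻¹ * Ω ‖Y.1‖ ‖Y.2‖)) := by
  by_cases hY : 2 * A < ‖Y.2‖ ∧ Y.1 ∈ ball ((3 * ‖Y.2‖ / 2) • e) (‖Y.2‖ / 2)
  · obtain ⟨hη, hξ⟩ := hY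
    have hc : ‖(3 * ‖Y.2‖ / 2) • e‖ = 3 * ‖Y.2‖ / 2 := by
      rw [norm_smul, he, mul_one, Real.norm_of_nonneg (by positivity)]
    have hξ₁ : ‖Y.2‖ < ‖Y.1‖ := by
      linarith [norm_sub_norm_le ((3 * ‖Y.2‖ / 2) • e) Y.1, mem_ball_iff_norm'.mp hξ]
    have hξ₂ : ‖Y.1‖ < 2 * ‖Y.2‖ := by linarith [norm_lt_of_mem_ball hξ]
    simp only [mem_ofPred_eq, hη, hξ, indicator_of_mem, Pi.one_apply, mul_one]
    rw [← ENNReal.ofReal_mul (by positivity)]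
    exact ENNReal.ofReal_le_ofReal (rpow_mul_inv_mul_rpow_le_sqrt_rpow_mul hd hdμ hM' hX₁ hX₂ hη
      hξ₁.le hξ₂.le (hΩ _ _ (by linarith) hξ₁ hξ₂))
  · rw [not_and_or] at hY
    rcases hY with hη | hξ
    · simp [hη]
    · rw [mem_ball] at hξ
      simp [hξ]

theorem inv_mul_rpow_le_mul_rpow_div_neg {d μ κ A : ℝ} (hd : 0 < d) (hdμ : 1 < d * μ)
    (hs : 0 < 1 - (d - 2) * μ) (hκ : 0 < κ) (hA : 0 < A) :
    ((1 + (κ / (4 * d))⁻¹) * (1 - (d - 2) * μ))⁻¹ * A ^ (d - 2 - 1 / μ) ≤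
      κ * ((2 * A) ^ (d - 2 - 1 / μ) / -(d - 2 - 1 / μ)) := by
  have hμ : 0 < μ := pos_of_mul_pos_right (one_pos.trans hdμ) hd.le
  set s := 1 - (d - 2) * μ
  set t := d - 2 - 1 / μ
  have hts : -t = s / μ := by simp only [s, t]; field_simp; ring
  have ht : -2 ≤ t := by
    have : 1 / μ < d := by rw [div_lt_iff₀ hμ]; linarith
    linarith
  have hc : (1 + (κ / (4 * d))⁻¹)⁻¹ ≤ κ / (4 * d) := by
    have hc₀ : 0 < (κ / (4 * d))⁻¹ := by positivity
    simpa using inv_anti₀ hc₀ (le_add_of_nonneg_left zero_le_one)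
  have hμd : 1 / d ≤ μ := by rw [div_le_iff₀ hd]; linarith
  calc ((1 + (κ / (4 * d))⁻¹) * s)⁻¹ * A ^ t = (1 + (κ / (4 * d))⁻¹)⁻¹ * (A ^ t / s) := by
        rw [mul_inv]; ring
    _ ≤ κ / (4 * d) * (A ^ t / s) := by gcongr
    _ = κ * (4⁻¹ * A ^ t) * (1 / d) / s := by ring
    _ ≤ κ * (2 * A) ^ t * μ / s := by
        gcongr
        exact inv_four_mul_rpow_le_rpow hA (by linarith) le_rfl ht
    _ = κ * ((2 * A) ^ t / -t) := by rw [hts]; field_simp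

/-- Lower bound for the Newtonian potential `Ψ₀` associated with the density
`|ξ|^{d-3}|η|^{-1} Ω(|ξ|,|η|)` in `ℝ^{d+4} = ℝ^{d+1} × ℝ³`, using only the lower
bound for `Ω` in the core region `2 < z < r < 2z`.  The potential is formulated as a
Lebesgue (lower) integral, and `|X - Y|` is the Euclidean norm
`√(‖x-ξ‖² + ‖y-η‖²)`. -/
theorem newtonian_potential_lower_bound (d : ℕ) (hd : 3 ≤ d) (M' : ℝ) (hM' : 1 < M')
    (βd : ℝ) (hβd : 0 < βd) :
    ∃ C : ℝ, 1 < C ∧ ∀ μ : ℝ, 1 / (d:ℝ) < μ → μ < 1 / ((d:ℝ) - 2) →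
      ∀ Ω : ℝ → ℝ → ℝ, Measurable (fun p : ℝ × ℝ => Ω p.1 p.2) →
        (∀ r z : ℝ, 0 < r → 0 < z → 0 < Ω r z) →
        (∀ r z : ℝ, 2 < z → z < r → r < 2 * z →
          M'⁻¹ * r ^ (-(((d:ℝ) - 1) / ((d:ℝ) * μ))) * z ^ (-(1 / ((d:ℝ) * μ))) ≤ Ω r z) →
        ∀ X : EuclideanSpace ℝ (Fin (d + 1)) × EuclideanSpace ℝ (Fin 3),
          ENNReal.ofReal ((C * (1 - ((d:ℝ) - 2) * μ))⁻¹ *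
              Real.sqrt (1 + ‖X.1‖ ^ 2 + ‖X.2‖ ^ 2) ^ ((d:ℝ) - 2 - 1 / μ))
            ≤ ENNReal.ofReal βd *
              ∫⁻ Y : EuclideanSpace ℝ (Fin (d + 1)) × EuclideanSpace ℝ (Fin 3),
                ENNReal.ofReal
                  (Real.sqrt (‖X.1 - Y.1‖ ^ 2 + ‖X.2 - Y.2‖ ^ 2) ^ (-(d:ℝ) - 2) *
                    (‖Y.1‖ ^ ((d:ℝ) - 3) * ‖Y.2‖⁻¹ * Ω ‖Y.1‖ ‖Y.2‖)) := by
  have hd₃ : (3:ℝ) ≤ d := by exact_mod_cast hd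
  have hV : ∀ n, 0 < volume.real (ball (0 : EuclideanSpace ℝ (Fin (n + 1))) 1) := fun n =>
    ENNReal.toReal_pos (measure_ball_pos _ _ one_pos).ne' measure_ball_lt_top.ne
  set K : ℝ := 4 ^ (-(d:ℝ) - 2) * (4⁻¹ * M'⁻¹)
  set κ : ℝ := βd * (K * (volume.real (ball (0 : EuclideanSpace ℝ (Fin (d + 1))) 1) / 2 ^ (d + 1) *
    (3 * volume.real (ball (0 : EuclideanSpace ℝ (Fin 3)) 1))))
  have hκ : 0 < κ := by have := hV d; have := hV 2; positivity
  refine ⟨1 + (κ / (4 * d))⁻¹, lt_add_of_pos_right _ (by positivity),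
    fun μ hμ₁ hμ₂ Ω _ _ hΩ X => ?_⟩
  have hdμ : 1 < d * μ := by rwa [div_lt_iff₀' (by positivity)] at hμ₁
  have hs : 0 < 1 - ((d:ℝ) - 2) * μ := by rw [lt_div_iff₀' (by linarith)] at hμ₂; linarith
  have hμ : 0 < μ := pos_of_mul_pos_right (one_pos.trans hdμ) (by positivity)
  set A := √(1 + ‖X.1‖ ^ 2 + ‖X.2‖ ^ 2)
  have hA : 1 ≤ A := Real.one_le_sqrt.mpr (by linarith [sq_nonneg ‖X.1‖, sq_nonneg ‖X.2‖])
  have hX₁ : ‖X.1‖ ≤ A := Real.le_sqrt_of_sq_le (by nlinarith)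
  have hX₂ : ‖X.2‖ ≤ A := Real.le_sqrt_of_sq_le (by nlinarith)
  set e : EuclideanSpace ℝ (Fin (d + 1)) := EuclideanSpace.single 0 1
  have he : ‖e‖ = 1 := by simp [e]
  have ht : (d:ℝ) - 2 - 1 / μ < 0 := by
    have : (d:ℝ) - 2 < 1 / μ := (lt_div_iff₀ hμ).mpr (by linarith)
    linarith
  have hexp : -6 - 1 / μ + ((d + 1 : ℕ) : ℝ) + ((3 : ℕ) : ℝ) = d - 2 - 1 / μ := by push_cast; ring
  have hminorant := lintegral_indicator_lt_norm_rpow_mul_indicator_ball volume volume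
    (c := fun η : EuclideanSpace ℝ (Fin 3) => (3 * ‖η‖ / 2) • e) (by fun_prop)
    (q := -6 - 1 / μ) (R := 2 * A) (by simpa only [finrank_euclideanSpace_fin, hexp])
    (by positivity)
  simp only [← Measure.volume_eq_prod, finrank_euclideanSpace_fin, hexp] at hminorant
  refine le_trans ?_ (mul_le_mul_right (lintegral_mono fun Y => rpow_mul_indicator_le_sqrt_rpow_mul
    (by linarith) hdμ.le (by linarith) hA hΩ he hX₁ hX₂ Y) _)
  rw [lintegral_const_mul' _ _ ENNReal.ofReal_ne_top, hminorant,
    ← ENNReal.ofReal_mul (by positivity), ← ENNReal.ofReal_mul hβd.le]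
  exact ENNReal.ofReal_le_ofReal ((inv_mul_rpow_le_mul_rpow_div_neg (by positivity) hdμ hs hκ
    (by positivity)).trans_eq (by ring))
end
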